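/- Let G be a finite simple graph and let x be a half-integral optimal solution to LPVC(G), and let G' = G[V^x_{1/2}] be the induced subgraph of G on V^x_{1/2}. Then MM(G') − 2·LP(G') ≤ MM(G) − 2·LP(G) + |V^x_1|. -/
import Mathlib


open scoped Classical

/-- A fractional vertex cover of `G`. -/
def IsFVC {V : Type} (G : SimpleGraph V) (x : V → ℝ) : Prop :=
  (∀ v, 0 ≤ x v ∧ x v ≤ 1) ∧ ∀ ⦃u v⦄, G.Adj u v → 1 ≤ x u + x v

/-- The weight of a fractional vertex cover. -/
noncomputable def fvcWeight {V : Type} [Fintype V] (x : V → ℝ) : ℝ := ∑ v, x v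

/-- `LP(G)`: the minimum weight of a fractional vertex cover of `G`. -/
noncomputable def LPopt {V : Type} [Fintype V] (G : SimpleGraph V) : ℝ :=
  sInf {w : ℝ | ∃ x : V → ℝ, IsFVC G x ∧ w = fvcWeight x}

/-- A matching of `G`: a set of pairwise vertex-disjoint edges of `G`. -/
def IsMatchingSet {V : Type} (G : SimpleGraph V) (M : Finset (Sym2 V)) : Prop :=
  (∀ e ∈ M, e ∈ G.edgeSet) ∧ ∀ e ∈ M, ∀ f ∈ M, e ≠ f → ∀ v : V, v ∈ e → v ∉ f

/-- `MM(G)`: the maximum size of a matching of `G`. -/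
noncomputable def MMnum {V : Type} (G : SimpleGraph V) : ℕ :=
  sSup {n : ℕ | ∃ M : Finset (Sym2 V), IsMatchingSet G M ∧ M.card = n}

/-- `OPT(G)`: the minimum size of a vertex cover of `G`. -/
noncomputable def VCnum {V : Type} (G : SimpleGraph V) : ℕ :=
  sInf {n : ℕ | ∃ S : Finset V, (∀ ⦃u v⦄, G.Adj u v → u ∈ S ∨ v ∈ S) ∧ S.card = n}

/-- `N(X)`: the set of vertices outside `X` having a neighbour in `X`. -/
def nbhd {V : Type} (G : SimpleGraph V) (X : Set V) : Set V :=
  {v | v ∉ X ∧ ∃ u ∈ X, G.Adj u v}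

/-- `X` is an independent set in `G`. -/
def IndepSet {V : Type} (G : SimpleGraph V) (X : Set V) : Prop :=
  ∀ u ∈ X, ∀ v ∈ X, ¬ G.Adj u v

/-- `surplus(G) ≥ s`: every nonempty independent set `X` satisfies `|N(X)| ≥ |X| + s`. -/
def SurplusGE {V : Type} (G : SimpleGraph V) (s : ℕ) : Prop :=
  ∀ X : Set V, X.Nonempty → IndepSet G X → X.ncard + s ≤ (nbhd G X).ncard

/-- The matching `M` saturates the vertex `v`. -/
def Saturates {V : Type} (M : Finset (Sym2 V)) (v : V) : Prop := ∃ e ∈ M, v ∈ e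

/-- `O(G)`: vertices left unsaturated by some maximum matching of `G`. -/
def OSet {V : Type} (G : SimpleGraph V) : Set V :=
  {v | ∃ M : Finset (Sym2 V), IsMatchingSet G M ∧ M.card = MMnum G ∧ ¬ Saturates M v}

/-- `I(G)`: vertices outside `O(G)` having a neighbour in `O(G)`. -/
def ISet {V : Type} (G : SimpleGraph V) : Set V := nbhd G (OSet G)

/-- `P(G)`: the remaining vertices. -/
def GEPSet {V : Type} (G : SimpleGraph V) : Set V := (OSet G ∪ ISet G)ᶜ

-- basic matching lemmas
lemma matching_set_nonempty {V : Type} (G : SimpleGraph V) :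
    {n : ℕ | ∃ M : Finset (Sym2 V), IsMatchingSet G M ∧ M.card = n}.Nonempty :=
  ⟨0, ∅, ⟨fun e he => absurd he (Finset.notMem_empty e),
    fun e he => absurd he (Finset.notMem_empty e)⟩, rfl⟩

lemma matching_set_bdd {V : Type} [Fintype V] (G : SimpleGraph V) :
    BddAbove {n : ℕ | ∃ M : Finset (Sym2 V), IsMatchingSet G M ∧ M.card = n} := by
  refine ⟨Fintype.card (Sym2 V), ?_⟩
  rintro n ⟨M, _, rfl⟩
  exact M.card_le_univ

lemma card_le_MMnum {V : Type} [Fintype V] (G : SimpleGraph V) (M : Finset (Sym2 V))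
    (h : IsMatchingSet G M) : M.card ≤ MMnum G :=
  le_csSup (matching_set_bdd G) ⟨M, h, rfl⟩

lemma exists_max_matching {V : Type} [Fintype V] (G : SimpleGraph V) :
    ∃ M : Finset (Sym2 V), IsMatchingSet G M ∧ M.card = MMnum G :=
  Nat.sSup_mem (matching_set_nonempty G) (matching_set_bdd G)

-- basic LP lemmas
lemma LP_le {V : Type} [Fintype V] (G : SimpleGraph V) {y : V → ℝ} (hy : IsFVC G y) :
    LPopt G ≤ fvcWeight y := by
  apply csInf_le
  · refine ⟨0, ?_⟩
    rintro w ⟨z, hz, rfl⟩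
    exact Finset.sum_nonneg fun v _ => (hz.1 v).1
  · exact ⟨y, hy, rfl⟩

lemma LP_ge {V : Type} [Fintype V] (G : SimpleGraph V) {c : ℝ}
    (h : ∀ y : V → ℝ, IsFVC G y → c ≤ fvcWeight y) : c ≤ LPopt G := by
  apply le_csInf
  · exact ⟨fvcWeight (fun _ => 1), fun _ => 1, ⟨fun v => ⟨zero_le_one, le_refl 1⟩,
      fun u v _ => by norm_num⟩, rfl⟩
  · rintro w ⟨y, hy, rfl⟩; exact h y hy

lemma sum_dite_subtype {V : Type} [Fintype V] (p : V → Prop) (g : Subtype p → ℝ) :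
    ∑ v : V, (if h : p v then g ⟨v, h⟩ else 0) = ∑ v : Subtype p, g v := by
  rw [← Finset.sum_filter_add_sum_filter_not Finset.univ p]
  rw [Finset.sum_eq_zero (fun v hv => dif_neg (Finset.mem_filter.mp hv).2), add_zero]
  rw [Finset.sum_subtype (p := p) (Finset.univ.filter p) (by simp)
    (fun v => if h : p v then g ⟨v, h⟩ else 0)]
  exact Finset.sum_congr rfl fun v _ => by rw [dif_pos v.2]

lemma sum_indicator_card {V : Type} [Fintype V] (p : V → Prop) :
    ∑ v : V, (if p v then (1:ℝ) else 0) = (({v | p v} : Set V).ncard : ℝ) := by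
  rw [Finset.sum_boole, Set.ncard_eq_toFinset_card', Set.toFinset_setOf]

lemma weight_split {V : Type} [Fintype V] (x : V → ℝ)
    (hhalf : ∀ v, x v = 0 ∨ x v = 1 / 2 ∨ x v = 1) :
    fvcWeight x = (({v | x v = 1} : Set V).ncard : ℝ)
      + (({v | x v = 1/2} : Set V).ncard : ℝ) / 2 := by
  have key : ∀ v, x v = (if x v = 1 then (1:ℝ) else 0)
      + (1/2) * (if x v = 1/2 then (1:ℝ) else 0) := by
    intro v
    rcases hhalf v with h | h | h <;> rw [h] <;> norm_num
  rw [fvcWeight, Finset.sum_congr rfl fun v _ => key v, Finset.sum_add_distrib,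
    ← Finset.mul_sum, sum_indicator_card, sum_indicator_card]
  ring

lemma LPhalf_ge {V : Type} [Fintype V] (G : SimpleGraph V) (x : V → ℝ) (hx : IsFVC G x)
    (hhalf : ∀ v, x v = 0 ∨ x v = 1 / 2 ∨ x v = 1) (hopt : fvcWeight x = LPopt G) :
    (({v | x v = 1/2} : Set V).ncard : ℝ) / 2 ≤ LPopt (G.induce {v | x v = 1/2}) := by
  apply LP_ge
  intro y hy
  set z : V → ℝ := fun v =>
    (if x v = 1 then (1:ℝ) else 0) + (if h : x v = 1/2 then y ⟨v, h⟩ else 0) with hzdef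
  have hz : IsFVC G z := by
    constructor
    · intro v
      rcases hhalf v with h | h | h <;>
        simp only [hzdef, h, if_pos, if_neg, dif_pos, dif_neg] <;> norm_num
      · exact (hy.1 _)
    · intro u v huv
      have hcov := hx.2 huv
      rcases hhalf u with h1 | h1 | h1 <;> rcases hhalf v with h2 | h2 | h2
      · rw [h1, h2] at hcov; norm_num at hcov
      · rw [h1, h2] at hcov; norm_num at hcov
      · simp only [hzdef, h1, h2]; norm_num
      · rw [h1, h2] at hcov; norm_num at hcov
      · -- both 1/2
        have hadj : (G.induce {v | x v = 1/2}).Adj ⟨u, h1⟩ ⟨v, h2⟩ := huv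
        have := hy.2 hadj
        simp only [hzdef, h1, h2]
        norm_num
        convert this using 2 <;> norm_num
      · simp only [hzdef, h1, h2]
        norm_num
        linarith [(hy.1 ⟨u, h1⟩).1]
      · simp only [hzdef, h1, h2]; norm_num
      · simp only [hzdef, h1, h2]
        norm_num
        linarith [(hy.1 ⟨v, h2⟩).1]
      · simp only [hzdef, h1, h2]; norm_num
  have hle : LPopt G ≤ fvcWeight z := LP_le G hz
  have hwz : fvcWeight z = (({v | x v = 1} : Set V).ncard : ℝ) + fvcWeight y := by
    rw [fvcWeight, hzdef]
    rw [Finset.sum_add_distrib, sum_indicator_card,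
      sum_dite_subtype (fun v => x v = 1/2) y]
    rfl
  rw [← hopt, weight_split x hhalf] at hle
  rw [hwz] at hle
  linarith

lemma hall_injection {V : Type} [Fintype V] (G : SimpleGraph V) (x : V → ℝ) (hx : IsFVC G x)
    (hhalf : ∀ v, x v = 0 ∨ x v = 1 / 2 ∨ x v = 1) (hopt : fvcWeight x = LPopt G) :
    ∃ f : {v : V // x v = 1} → V, Function.Injective f ∧
      ∀ v, G.Adj v.1 (f v) ∧ x (f v) = 0 := by
  set t : {v : V // x v = 1} → Finset V :=
    fun v => Finset.univ.filter (fun u => G.Adj v.1 u ∧ x u = 0) with ht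
  have hall : ∀ s : Finset {v : V // x v = 1}, s.card ≤ (s.biUnion t).card := by
    intro s
    by_contra hlt
    push_neg at hlt
    set A : Finset V := s.image Subtype.val with hA
    set B : Finset V := s.biUnion t with hB
    have hAcard : A.card = s.card := Finset.card_image_of_injective s Subtype.val_injective
    have hxA : ∀ v ∈ A, x v = 1 := by
      intro v hv
      obtain ⟨u, _, rfl⟩ := Finset.mem_image.mp hv
      exact u.2
    have hxB : ∀ v ∈ B, x v = 0 := by
      intro v hv
      obtain ⟨u, _, hu⟩ := Finset.mem_biUnion.mp hv
      exact (Finset.mem_filter.mp hu).2.2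
    set x' : V → ℝ := fun v => if v ∈ A ∪ B then 1/2 else x v with hx'
    have hz : IsFVC G x' := by
      constructor
      · intro v
        simp only [hx']
        split
        · norm_num
        · exact hx.1 v
      · intro u v huv
        have hcov := hx.2 huv
        simp only [hx']
        by_cases hu : u ∈ A ∪ B <;> by_cases hv : v ∈ A ∪ B <;>
          simp only [hu, hv, if_pos, if_neg, if_true, if_false]
        · norm_num
        · -- u touched, v not
          rcases Finset.mem_union.mp hu with huA | huB
          · -- x u = 1; if x v = 0 then v ∈ B
            rcases hhalf v with h2 | h2 | h2
            · exfalso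
              apply hv
              apply Finset.mem_union_right
              obtain ⟨w, hw, hwu⟩ := Finset.mem_image.mp huA
              exact Finset.mem_biUnion.mpr ⟨w, hw, Finset.mem_filter.mpr
                ⟨Finset.mem_univ v, by rw [hwu]; exact huv, h2⟩⟩
            · rw [h2]; norm_num
            · rw [h2]; norm_num
          · have h0 := hxB u huB
            rw [h0] at hcov
            linarith
        · rcases Finset.mem_union.mp hv with hvA | hvB
          · rcases hhalf u with h2 | h2 | h2
            · exfalso
              apply hu
              apply Finset.mem_union_right
              obtain ⟨w, hw, hwv⟩ := Finset.mem_image.mp hvA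
              exact Finset.mem_biUnion.mpr ⟨w, hw, Finset.mem_filter.mpr
                ⟨Finset.mem_univ u, by rw [hwv]; exact huv.symm, h2⟩⟩
            · rw [h2]; norm_num
            · rw [h2]; norm_num
          · have h0 := hxB v hvB
            rw [h0] at hcov
            linarith
        · exact hcov
    have hdisj : Disjoint A B := by
      rw [Finset.disjoint_left]
      intro v hvA hvB
      have := hxA v hvA
      have := hxB v hvB
      linarith
    have hwz : fvcWeight x' = fvcWeight x + ((B.card : ℝ) - A.card) / 2 := by
      have e1 : fvcWeight x' =
          ∑ v ∈ A ∪ B, (1/2 : ℝ) + ∑ v ∈ (A ∪ B)ᶜ, x v := by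
        rw [fvcWeight, ← Finset.sum_add_sum_compl (A ∪ B)]
        congr 1
        · exact Finset.sum_congr rfl fun v hv => if_pos hv
        · exact Finset.sum_congr rfl fun v hv => if_neg (Finset.mem_compl.mp hv)
      have e2 : fvcWeight x = ∑ v ∈ A ∪ B, x v + ∑ v ∈ (A ∪ B)ᶜ, x v :=
        (Finset.sum_add_sum_compl (A ∪ B) x).symm
      have e3 : ∑ v ∈ A ∪ B, x v = (A.card : ℝ) := by
        rw [Finset.sum_union hdisj]
        rw [Finset.sum_congr rfl (fun v hv => hxA v hv),
          Finset.sum_congr rfl (fun v hv => hxB v hv)]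
        simp
      have e4 : ∑ v ∈ A ∪ B, (1/2 : ℝ) = ((A.card : ℝ) + B.card) / 2 := by
        rw [Finset.sum_const, Finset.card_union_of_disjoint hdisj]
        push_cast
        ring
      rw [e1, e2, e3, e4]
      ring
    have hle : LPopt G ≤ fvcWeight x' := LP_le G hz
    rw [← hopt, hwz] at hle
    have : (s.card : ℝ) ≤ (B.card : ℝ) := by
      rw [← hAcard]
      linarith
    have := Nat.cast_le (α := ℝ).mp this
    omega
  obtain ⟨f, hinj, hf⟩ :=
    (Finset.all_card_le_biUnion_card_iff_existsInjective' t).mp hall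
  refine ⟨f, hinj, fun v => ?_⟩
  have := hf v
  rw [ht] at this
  simpa using this

lemma MM_ge {V : Type} [Fintype V] (G : SimpleGraph V) (x : V → ℝ) (hx : IsFVC G x)
    (hhalf : ∀ v, x v = 0 ∨ x v = 1 / 2 ∨ x v = 1) (hopt : fvcWeight x = LPopt G) :
    MMnum (G.induce {v | x v = 1/2}) + ({v | x v = 1} : Set V).ncard ≤ MMnum G := by
  classical
  obtain ⟨M', hM', hcard'⟩ := exists_max_matching (G.induce {v | x v = 1/2})
  obtain ⟨f, hfinj, hf⟩ := hall_injection G x hx hhalf hopt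
  set val : {v : V | x v = 1/2} → V := Subtype.val with hval
  set M'' : Finset (Sym2 V) := M'.image (Sym2.map val) with hM''
  set H : Finset (Sym2 V) :=
    (Finset.univ : Finset {v : V // x v = 1}).image (fun v => s(v.1, f v)) with hH
  have hvalinj : Function.Injective val := Subtype.val_injective
  have hM''card : M''.card = M'.card :=
    Finset.card_image_of_injective _ (Sym2.map.injective hvalinj)
  have hM''mem : ∀ e ∈ M'', ∀ v, v ∈ e → x v = 1/2 := by
    intro e he v hv
    obtain ⟨e', _, rfl⟩ := Finset.mem_image.mp he
    obtain ⟨a, _, rfl⟩ := Sym2.mem_map.mp hv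
    exact a.2
  have hHinj : Function.Injective (fun v : {v : V // x v = 1} => s(v.1, f v)) := by
    intro a b hab
    simp only [Sym2.eq_iff] at hab
    rcases hab with ⟨h1, _⟩ | ⟨h1, h2⟩
    · exact Subtype.ext h1
    · exfalso
      have := (hf b).2
      rw [← h1] at this
      rw [a.2] at this
      norm_num at this
  have hHcard : H.card = Fintype.card {v : V // x v = 1} := by
    rw [hH, Finset.card_image_of_injective _ hHinj, Finset.card_univ]
  have hHmem : ∀ e ∈ H, ∃ v : {v : V // x v = 1}, e = s(v.1, f v) := by
    intro e he
    obtain ⟨v, _, rfl⟩ := Finset.mem_image.mp he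
    exact ⟨v, rfl⟩
  have hdisj : Disjoint M'' H := by
    rw [Finset.disjoint_left]
    intro e heM heH
    obtain ⟨v, rfl⟩ := hHmem e heH
    have := hM''mem _ heM v.1 (Sym2.mem_mk_left _ _)
    rw [v.2] at this
    norm_num at this
  have hmatch : IsMatchingSet G (M'' ∪ H) := by
    constructor
    · intro e he
      rcases Finset.mem_union.mp he with he | he
      · obtain ⟨e', he', rfl⟩ := Finset.mem_image.mp he
        induction e' using Sym2.ind with
        | _ a b =>
          rw [Sym2.map_pair_eq, SimpleGraph.mem_edgeSet]
          exact hM'.1 _ he'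
      · obtain ⟨v, rfl⟩ := hHmem e he
        rw [SimpleGraph.mem_edgeSet]
        exact (hf v).1
    · intro e₁ he₁ e₂ he₂ hne v hv₁ hv₂
      rcases Finset.mem_union.mp he₁ with h₁ | h₁ <;> rcases Finset.mem_union.mp he₂ with h₂ | h₂
      · -- both M''
        obtain ⟨e₁', he₁', rfl⟩ := Finset.mem_image.mp h₁
        obtain ⟨e₂', he₂', rfl⟩ := Finset.mem_image.mp h₂
        obtain ⟨a, ha, rfl⟩ := Sym2.mem_map.mp hv₁
        obtain ⟨b, hb, hba⟩ := Sym2.mem_map.mp hv₂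
        have hne' : e₁' ≠ e₂' := fun h => hne (by rw [h])
        have hab : b = a := hvalinj hba
        exact hM'.2 e₁' he₁' e₂' he₂' hne' a ha (hab ▸ hb)
      · -- M'' and H
        obtain ⟨w, rfl⟩ := hHmem e₂ h₂
        have hhalfv := hM''mem _ h₁ v hv₁
        rcases Sym2.mem_iff.mp hv₂ with rfl | rfl
        · rw [w.2] at hhalfv; norm_num at hhalfv
        · rw [(hf w).2] at hhalfv; norm_num at hhalfv
      · -- H and M''
        obtain ⟨w, rfl⟩ := hHmem e₁ h₁
        have hhalfv := hM''mem _ h₂ v hv₂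
        rcases Sym2.mem_iff.mp hv₁ with rfl | rfl
        · rw [w.2] at hhalfv; norm_num at hhalfv
        · rw [(hf w).2] at hhalfv; norm_num at hhalfv
      · -- both H
        obtain ⟨a, rfl⟩ := hHmem e₁ h₁
        obtain ⟨b, rfl⟩ := hHmem e₂ h₂
        have hab : a ≠ b := fun h => hne (by rw [h])
        rcases Sym2.mem_iff.mp hv₁ with rfl | rfl <;> rcases Sym2.mem_iff.mp hv₂ with h | h
        · exact hab (Subtype.ext h.symm).symm
        · have h1 := a.2
          have h2 := (hf b).2
          rw [← h] at h2
          rw [h1] at h2; norm_num at h2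
        · have h1 := b.2
          have h2 := (hf a).2
          rw [h] at h2
          rw [h1] at h2; norm_num at h2
        · exact hab (hfinj h)
  have hcard : (M'' ∪ H).card = MMnum (G.induce {v | x v = 1/2}) + ({v | x v = 1} : Set V).ncard := by
    rw [Finset.card_union_of_disjoint hdisj, hM''card, hcard', hHcard]
    congr 1
    rw [← Nat.card_coe_set_eq, Nat.card_eq_fintype_card]
    exact Fintype.card_congr (Equiv.refl _)
  calc MMnum (G.induce {v | x v = 1/2}) + ({v | x v = 1} : Set V).ncard
      = (M'' ∪ H).card := hcard.symm
    _ ≤ MMnum G := card_le_MMnum G _ hmatch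


/-- Reduction Rule 1 is safe:
`MM(G') − 2LP(G') ≤ MM(G) − 2LP(G) + |V^x_1|` for `G' = G[V^x_{1/2}]`. -/
theorem rule_one_safe {V : Type} [Fintype V] (G : SimpleGraph V)
    (x : V → ℝ) (hx : IsFVC G x)
    (hhalf : ∀ v, x v = 0 ∨ x v = 1 / 2 ∨ x v = 1)
    (hopt : fvcWeight x = LPopt G) :
    (MMnum (G.induce {v | x v = 1 / 2}) : ℝ) -
        2 * LPopt (G.induce {v | x v = 1 / 2}) ≤
      (MMnum G : ℝ) - 2 * LPopt G + (({v | x v = 1} : Set V).ncard : ℝ) := by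
  have hLP : LPopt G = (({v | x v = 1} : Set V).ncard : ℝ)
      + (({v | x v = 1/2} : Set V).ncard : ℝ) / 2 := by
    rw [← hopt, weight_split x hhalf]
  have hLP' := LPhalf_ge G x hx hhalf hopt
  have hMM := MM_ge G x hx hhalf hopt
  have hMM' : (MMnum (G.induce {v | x v = 1/2}) : ℝ) + (({v | x v = 1} : Set V).ncard : ℝ)
      ≤ (MMnum G : ℝ) := by
    have : ((MMnum (G.induce {v | x v = 1/2}) + ({v | x v = 1} : Set V).ncard : ℕ) : ℝ)
        ≤ ((MMnum G : ℕ) : ℝ) := Nat.cast_le.mpr hMM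
    push_cast at this
    linarith
  have h12 : ({v | x v = 1/2} : Set V) = {v | x v = 1/2} := rfl
  rw [hLP]
  norm_num
  linarith
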